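/- Let (a_n : n ∈ ℕ) be a sequence of positive reals with a_n → ∞, (a_{n+1} − a_n) of bounded variation (i.e. Σ_n |a_{n+2} − 2a_{n+1} + a_n| < ∞), and (1/√a_n) of bounded variation. Then the sequence (√(a_{n+1}/a_n)) is of bounded variation and converges to 1. -/

import Mathlib

/-- A real sequence is of bounded variation (class 𝒟₁). -/
def BoundedVariation (x : ℕ → ℝ) : Prop :=
  Summable fun n => |x (n + 1) - x n|

/-!
Put `b n = √(a n)`, so that `√(a (n+1) / a n) = 1 + e n / b n` with `e n = b (n+1) - b n`.
Now `e n = (a (n+1) - a n) / (b n + b (n+1))`, and `1 / (p + q)` is `1`-Lipschitz in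
`(1 / p, 1 / q)` for `p, q > 0`, so `n ↦ 1 / (b n + b (n+1))` inherits bounded variation from
`1 / b`. Thus `e` is a product of bounded-variation sequences, hence of bounded variation, hence
bounded and convergent, and `e / b = e · (1 / b)` is of bounded variation and tends to `0`
because `b → ∞`.
-/

open Filter Topology

namespace BoundedVariation

variable {x y : ℕ → ℝ}

theorem cauchySeq (hx : BoundedVariation x) : CauchySeq x :=
  cauchySeq_of_summable_dist <| hx.congr fun n => by rw [Real.dist_eq, abs_sub_comm]

theorem exists_tendsto (hx : BoundedVariation x) : ∃ L, Tendsto x atTop (𝓝 L) :=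
  cauchySeq_tendsto_of_complete hx.cauchySeq

theorem exists_abs_le (hx : BoundedVariation x) : ∃ C, ∀ n, |x n| ≤ C := by
  obtain ⟨R, -, hR⟩ := cauchySeq_bdd hx.cauchySeq
  refine ⟨|x 0| + R, fun n => ?_⟩
  have := hR n 0
  rw [Real.dist_eq] at this
  linarith [abs_sub_abs_le_abs_sub (x n) (x 0)]

theorem const_add (c : ℝ) (hx : BoundedVariation x) : BoundedVariation fun n => c + x n := by
  simpa only [BoundedVariation, add_sub_add_left_eq_sub] using hx

theorem mul (hx : BoundedVariation x) (hy : BoundedVariation y) :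
    BoundedVariation fun n => x n * y n := by
  obtain ⟨Cx, hCx⟩ := hx.exists_abs_le
  obtain ⟨Cy, hCy⟩ := hy.exists_abs_le
  refine Summable.of_nonneg_of_le (fun _ => abs_nonneg _) (fun n => ?_)
    ((hy.mul_left Cx).add (hx.mul_left Cy))
  calc |x (n + 1) * y (n + 1) - x n * y n|
      = |x (n + 1) * (y (n + 1) - y n) + (x (n + 1) - x n) * y n| := by ring_nf
    _ ≤ |x (n + 1)| * |y (n + 1) - y n| + |x (n + 1) - x n| * |y n| := by
      rw [← abs_mul, ← abs_mul]; exact abs_add_le _ _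
    _ ≤ Cx * |y (n + 1) - y n| + Cy * |x (n + 1) - x n| := by
      rw [mul_comm |x (n + 1) - x n|]
      gcongr
      exacts [hCx _, hCy _]

end BoundedVariation

theorem abs_sub_div_mul_le_abs_one_div_sub {p p' s s' : ℝ} (hp : 0 < p) (hp' : 0 < p')
    (hps : p ≤ s) (hps' : p' ≤ s') :
    |p - p'| / (s * s') ≤ |1 / p - 1 / p'| := by
  rw [one_div, one_div, inv_sub_inv hp.ne' hp'.ne', abs_div, abs_sub_comm,
    abs_of_pos (mul_pos hp hp')]
  gcongr
  linarith

theorem abs_one_div_add_sub_one_div_add_le {p q p' q' : ℝ} (hp : 0 < p) (hq : 0 < q)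
    (hp' : 0 < p') (hq' : 0 < q') :
    |1 / (p + q) - 1 / (p' + q')| ≤ |1 / p - 1 / p'| + |1 / q - 1 / q'| := by
  have hs := add_pos hp hq
  have hs' := add_pos hp' hq'
  calc |1 / (p + q) - 1 / (p' + q')|
      = |(p - p') + (q - q')| / ((p + q) * (p' + q')) := by
        rw [one_div, one_div, inv_sub_inv hs.ne' hs'.ne', abs_div, abs_of_pos (mul_pos hs hs'),
          abs_sub_comm]
        ring_nf
    _ ≤ |p - p'| / ((p + q) * (p' + q')) + |q - q'| / ((p + q) * (p' + q')) := by
        rw [← add_div]; gcongr; exact abs_add_le _ _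
    _ ≤ |1 / p - 1 / p'| + |1 / q - 1 / q'| := by
        gcongr
        · exact abs_sub_div_mul_le_abs_one_div_sub hp hp' (by linarith) (by linarith)
        · exact abs_sub_div_mul_le_abs_one_div_sub hq hq' (by linarith) (by linarith)

theorem boundedVariation_one_div_add_succ {b : ℕ → ℝ} (hb : ∀ n, 0 < b n)
    (hu : BoundedVariation fun n => 1 / b n) :
    BoundedVariation fun n => 1 / (b n + b (n + 1)) :=
  Summable.of_nonneg_of_le (fun _ => abs_nonneg _)
    (fun _ => abs_one_div_add_sub_one_div_add_le (hb _) (hb _) (hb _) (hb _))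
    (hu.add ((summable_nat_add_iff 1).mpr hu))

theorem boundedVariation_succ_sub {b : ℕ → ℝ} (hb : ∀ n, 0 < b n)
    (hd : BoundedVariation fun n => b (n + 1) ^ 2 - b n ^ 2)
    (hu : BoundedVariation fun n => 1 / b n) :
    BoundedVariation fun n => b (n + 1) - b n := by
  convert hd.mul (boundedVariation_one_div_add_succ hb hu) using 2 with n
  have := (add_pos (hb n) (hb (n + 1))).ne'
  field_simp
  ring

theorem succ_div_eq_one_add {b : ℕ → ℝ} (hb : ∀ n, 0 < b n) (n : ℕ) :
    b (n + 1) / b n = 1 + (b (n + 1) - b n) * (1 / b n) := by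
  field_simp [(hb n).ne']
  ring

theorem boundedVariation_succ_div {b : ℕ → ℝ} (hb : ∀ n, 0 < b n)
    (he : BoundedVariation fun n => b (n + 1) - b n)
    (hu : BoundedVariation fun n => 1 / b n) :
    BoundedVariation fun n => b (n + 1) / b n := by
  simpa only [succ_div_eq_one_add hb] using (he.mul hu).const_add 1

theorem tendsto_succ_div_nhds_one {b : ℕ → ℝ} (hb : ∀ n, 0 < b n)
    (he : BoundedVariation fun n => b (n + 1) - b n) (hbtop : Tendsto b atTop atTop) :
    Tendsto (fun n => b (n + 1) / b n) atTop (𝓝 1) := by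
  obtain ⟨L, hL⟩ := he.exists_tendsto
  have hu : Tendsto (fun n => 1 / b n) atTop (𝓝 0) := by
    simp only [one_div]; exact hbtop.inv_tendsto_atTop
  simpa only [succ_div_eq_one_add hb, mul_zero, add_zero] using (hL.mul hu).const_add 1

theorem sqrt_ratio_bounded_variation
    (a : ℕ → ℝ) (hpos : ∀ n, 0 < a n)
    (hinf : Filter.Tendsto a Filter.atTop Filter.atTop)
    (hdiff : BoundedVariation fun n => a (n + 1) - a n)
    (hinv : BoundedVariation fun n => 1 / Real.sqrt (a n)) :
    BoundedVariation (fun n => Real.sqrt (a (n + 1) / a n)) ∧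
      Filter.Tendsto (fun n => Real.sqrt (a (n + 1) / a n)) Filter.atTop (nhds 1) := by
  have hb : ∀ n, 0 < √(a n) := fun n => Real.sqrt_pos.mpr (hpos n)
  have hd : BoundedVariation fun n => √(a (n + 1)) ^ 2 - √(a n) ^ 2 := by
    simpa only [Real.sq_sqrt (hpos _).le] using hdiff
  have he := boundedVariation_succ_sub (b := fun n => √(a n)) hb hd hinv
  have hratio : (fun n => √(a (n + 1) / a n)) = fun n => √(a (n + 1)) / √(a n) :=
    funext fun n => Real.sqrt_div' _ (hpos n).le
  rw [hratio]
  exact ⟨boundedVariation_succ_div (b := fun n => √(a n)) hb he hinv,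
    tendsto_succ_div_nhds_one (b := fun n => √(a n)) hb he (Real.tendsto_sqrt_atTop.comp hinf)⟩
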